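/- Record yields ordered triples: Let $\mathcal{T}$ be a transitive tournament on vertices $v_1, \dots, v_N$ with each edge colored one of R, G, B, K. For each vertex $v_i$, let $L_i = (x_i, y_i, z_i)$ where $x_i, y_i, z_i$ are the lengths of the longest directed paths ending at $v_i$ using only RGK-, RBK-, GBK-colored edges, respectively. Then for every $i < j$, the difference $L_j - L_i$ has at least two strictly positive coordinates. -/
import Mathlib


inductive RGBK | R | G | B | K
deriving DecidableEq

def ChainCol {γ : Type*} {N : ℕ} (col : Fin N → Fin N → γ) (C : Set γ)
    {k : ℕ} (i : Fin k → Fin N) : Prop :=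
  StrictMono i ∧ ∀ (t : ℕ) (h : t + 1 < k),
    col (i ⟨t, Nat.lt_of_succ_lt h⟩) (i ⟨t + 1, h⟩) ∈ C

def EndsAt {N k : ℕ} (i : Fin k → Fin N) (v : Fin N) : Prop :=
  ∃ hk : 0 < k, i ⟨k - 1, Nat.sub_lt hk one_pos⟩ = v

lemma extend_chain {N : ℕ} (col : Fin N → Fin N → RGBK) (C : Set RGBK)
    (a b : Fin N) (hab : a < b) (hc : col a b ∈ C) {k : ℕ}
    (ch : Fin k → Fin N) (h1 : ChainCol col C ch) (h2 : EndsAt ch a) :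
    ∃ ch' : Fin (k + 1) → Fin N, ChainCol col C ch' ∧ EndsAt ch' b := by
  obtain ⟨hk, hend⟩ := h2
  refine ⟨fun m => if h : m.1 < k then ch ⟨m.1, h⟩ else b, ⟨?_, ?_⟩, ?_⟩
  · intro p q hpq
    by_cases hq : q.1 < k
    · have hp : p.1 < k := lt_trans hpq hq
      simp only [dif_pos hp, dif_pos hq]
      exact h1.1 hpq
    · by_cases hp : p.1 < k
      · simp only [dif_pos hp, dif_neg hq]
        calc ch ⟨p.1, hp⟩ ≤ ch ⟨k - 1, Nat.sub_lt hk one_pos⟩ := by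
              apply h1.1.monotone
              exact Nat.le_sub_one_of_lt hp
          _ = a := hend
          _ < b := hab
      · exfalso
        have : p.1 = k := Nat.eq_of_lt_succ_of_not_lt p.2 hp
        have : q.1 = k := Nat.eq_of_lt_succ_of_not_lt q.2 hq
        omega
  · intro t ht
    by_cases h : t + 1 < k
    · have ht' : t < k := Nat.lt_of_succ_lt h
      simp only [dif_pos h, dif_pos ht']
      exact h1.2 t h
    · have htk : t + 1 = k := Nat.eq_of_lt_succ_of_not_lt ht h
      have ht' : t < k := by omega
      simp only [dif_pos ht', dif_neg h]
      have hidx : (⟨t, ht'⟩ : Fin k) = ⟨k - 1, Nat.sub_lt hk one_pos⟩ := by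
        ext; simp; omega
      have : ch ⟨t, ht'⟩ = a := by rw [hidx, hend]
      rw [this]; exact hc
  · refine ⟨Nat.succ_pos k, ?_⟩
    simp only [Nat.add_sub_cancel, dif_neg (lt_irrefl k)]

theorem stmt_13 (N : ℕ) (col : Fin N → Fin N → RGBK)
    (x y z : Fin N → ℕ)
    (hx : ∀ v : Fin N, IsGreatest {k : ℕ | ∃ i : Fin k → Fin N,
      ChainCol col ({RGBK.R, RGBK.G, RGBK.K} : Set RGBK) i ∧ EndsAt i v} (x v))
    (hy : ∀ v : Fin N, IsGreatest {k : ℕ | ∃ i : Fin k → Fin N,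
      ChainCol col ({RGBK.R, RGBK.B, RGBK.K} : Set RGBK) i ∧ EndsAt i v} (y v))
    (hz : ∀ v : Fin N, IsGreatest {k : ℕ | ∃ i : Fin k → Fin N,
      ChainCol col ({RGBK.G, RGBK.B, RGBK.K} : Set RGBK) i ∧ EndsAt i v} (z v)) :
    ∀ i j : Fin N, i < j →
      (x i < x j ∧ y i < y j) ∨ (x i < x j ∧ z i < z j) ∨
      (y i < y j ∧ z i < z j) := by
  intro i j hij
  have key : ∀ (C : Set RGBK) (f : Fin N → ℕ),
      (∀ v : Fin N, IsGreatest {k : ℕ | ∃ ch : Fin k → Fin N,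
        ChainCol col C ch ∧ EndsAt ch v} (f v)) →
      col i j ∈ C → f i < f j := by
    intro C f hf hc
    obtain ⟨ch, hch, hend⟩ := (hf i).1
    obtain ⟨ch', hch', hend'⟩ := extend_chain col C i j hij hc ch hch hend
    have : f i + 1 ≤ f j := (hf j).2 ⟨ch', hch', hend'⟩
    omega
  cases hcol : col i j with
  | R =>
    exact Or.inl ⟨key _ x hx (by rw [hcol]; simp), key _ y hy (by rw [hcol]; simp)⟩
  | G =>
    exact Or.inr (Or.inl ⟨key _ x hx (by rw [hcol]; simp), key _ z hz (by rw [hcol]; simp)⟩)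
  | B =>
    exact Or.inr (Or.inr ⟨key _ y hy (by rw [hcol]; simp), key _ z hz (by rw [hcol]; simp)⟩)
  | K =>
    exact Or.inl ⟨key _ x hx (by rw [hcol]; simp), key _ y hy (by rw [hcol]; simp)⟩
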